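/- arXiv:1205.0879 — 2 statements merged into one kernel-verified Lean document; each statement's English description precedes it below -/
import Mathlib

section
/- Let L_1, L_2 be nonzero elements of K[∂;δ] of orders r_1 and r_2. Then ord(lclm(L_1, L_2)) = rank(U_{r_1+r_2}) − 1, where U_n is the matrix whose rows are S_n(L_1) stacked above S_n(L_2). -/
/-
Setting: a differential field `(K, δ)` (δ additive and Leibniz), and the ring
`A = K[∂;δ]` of linear differential operators, axiomatised as follows:
a ring `A`, a ring embedding `ι : K →+* A`, an element `D = ∂` satisfying the
commutation rule `∂ a = a ∂ + δ(a)`, together with the fact that every element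
of `A` is uniquely of the form `Σ ι(a_i) ∂^i` (the bijection `e`).
-/

noncomputable section

variable {K A : Type*}

/-- Order of a differential operator, read off from its coefficient expansion
(`e.symm x` is the finitely supported family of coefficients of `x` w.r.t. the powers `∂^i`). -/
def ordOf [Zero K] (e : (ℕ →₀ K) ≃ A) (x : A) : ℕ :=
  (e.symm x).support.sup id

/-- `φ_n` : the row vector `(a_n, a_{n-1}, ..., a_0)` of an operator of order `≤ n`. -/
def phiV [Zero K] (e : (ℕ →₀ K) ≃ A) (n : ℕ) (x : A) : Fin (n + 1) → K :=
  fun j => e.symm x (n - (j : ℕ))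

/-- Inverse of `φ_n` : the operator with coefficient vector `(a_n, ..., a_0)`. -/
def phiInv [AddCommMonoid K] (e : (ℕ →₀ K) ≃ A) (n : ℕ) (v : Fin (n + 1) → K) : A :=
  e (∑ j : Fin (n + 1), Finsupp.single (n - (j : ℕ)) (v j))

/-- The Sylvester-type matrix `S_n(P)` of an operator `P` of order `m`:
rows are `φ_n(∂^{n-m} P), ..., φ_n(P)`. -/
def Syl [Zero K] [Monoid A] (e : (ℕ →₀ K) ≃ A) (D : A) (n m : ℕ) (P : A) :
    Matrix (Fin (n - m + 1)) (Fin (n + 1)) K :=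
  Matrix.of fun i j => phiV e n (D ^ (n - m - (i : ℕ)) * P) j

/-- The block matrix `M_n` with diagonal blocks `S_n(L_i)` and a last block row
of negated identity matrices `S_n(-1)`. -/
def Mmat [Field K] [Ring A] (e : (ℕ →₀ K) ≃ A) (D : A) {k : ℕ}
    (L : Fin k → A) (r : Fin k → ℕ) (n : ℕ) :
    Matrix ((Σ i : Fin k, Fin (n - r i + 1)) ⊕ Fin (n + 1)) (Fin k × Fin (n + 1)) K :=
  Matrix.of fun row col =>
    match row with
    | Sum.inl ⟨i, a⟩ => if i = col.1 then Syl e D n (r i) (L i) a col.2 else 0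
    | Sum.inr a => if (a : ℕ) = (col.2 : ℕ) then -1 else 0

/-- `M` is a (nonzero) common left multiple of the family `L`. -/
def IsCLM [Ring A] {k : ℕ} (L : Fin k → A) (M : A) : Prop :=
  M ≠ 0 ∧ ∀ i, ∃ Q, M = Q * L i

/-- `M` is a least common left multiple of the family `L`: a common left multiple
of minimal order. -/
def IsLCLM [Field K] [Ring A] (e : (ℕ →₀ K) ≃ A) {k : ℕ} (L : Fin k → A) (M : A) : Prop :=
  IsCLM L M ∧ ∀ M', IsCLM L M' → ordOf e M ≤ ordOf e M'

end

/-!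
Put `n = r₁ + r₂`. Up to `φ_n`, the rows of `S_n(L)` span the coefficient vectors of the left
multiples `Q L` with `ord Q ≤ n - ord L`; as `K[∂;δ]` has no zero divisors, this space has
dimension `n - ord L + 1`. Left Euclidean division shows that the operators that are left
multiples of both `L₁` and `L₂` are exactly the left multiples of `lclm(L₁, L₂)`, so the two row
spaces meet in a space of dimension `n - ord lclm + 1`; the count `(r₂ + 1) + (r₁ + 1) > n + 1`
forces `ord lclm ≤ n` here. Grassmann's formula then gives `rank U_n = ord lclm + 1`.
-/

open Finsupp (single supported)

theorem range_fin_rev_eq_image_Iic {α : Type*} (s : ℕ) (g : ℕ → α) :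
    Set.range (fun i : Fin (s + 1) => g (s - i)) = g '' Set.Iic s := by
  ext x
  constructor
  · rintro ⟨i, rfl⟩
    exact ⟨s - i, Nat.sub_le s i, rfl⟩
  · rintro ⟨k, hk, rfl⟩
    exact ⟨⟨s - k, by omega⟩, by simp [Nat.sub_sub_self (Set.mem_Iic.1 hk)]⟩

theorem finrank_map_eq_of_disjoint_ker {R M N : Type*} [Ring R] [AddCommGroup M] [Module R M]
    [AddCommGroup N] [Module R N] (f : M →ₗ[R] N) {V : Submodule R M}
    (h : Disjoint V (LinearMap.ker f)) : Module.finrank R (V.map f) = Module.finrank R V := by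
  rw [← LinearMap.range_domRestrict]
  exact LinearMap.finrank_range_of_inj (LinearMap.injective_domRestrict_iff.2 h)

namespace DiffOp

variable {K A : Type*}

section Order

variable [Zero K] {e : (ℕ →₀ K) ≃ A}

theorem ordOf_le_iff {x : A} {n : ℕ} : ordOf e x ≤ n ↔ ∀ j, n < j → e.symm x j = 0 := by
  simp only [ordOf, Finset.sup_le_iff, id, Finsupp.mem_support_iff]
  exact ⟨fun h j hj => by_contra fun hne => (h j hne).not_gt hj,
    fun h j hne => not_lt.1 fun hj => hne (h j hj)⟩

theorem coeff_eq_zero_of_ordOf_lt {x : A} {j : ℕ} (h : ordOf e x < j) : e.symm x j = 0 :=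
  ordOf_le_iff.1 le_rfl j h

theorem le_ordOf_of_coeff_ne_zero {x : A} {j : ℕ} (h : e.symm x j ≠ 0) : j ≤ ordOf e x :=
  Finset.le_sup (f := id) (Finsupp.mem_support_iff.2 h)

end Order

theorem ordOf_le_iff_mem_supported [Semiring K] {e : (ℕ →₀ K) ≃ A} {x : A} {n : ℕ} :
    ordOf e x ≤ n ↔ e.symm x ∈ supported K K (Set.Iic n) := by
  simp only [ordOf, Finset.sup_le_iff, Finsupp.mem_supported, Set.subset_def, Finset.mem_coe, id,
    Set.mem_Iic]

/-- `phiV e n = revCoeffs n ∘ e.symm`. -/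
noncomputable def revCoeffs [Semiring K] (n : ℕ) : (ℕ →₀ K) →ₗ[K] Fin (n + 1) → K :=
  LinearMap.pi fun j => Finsupp.lapply (n - j)

theorem disjoint_supported_ker_revCoeffs [Ring K] (n : ℕ) :
    Disjoint (supported K K (Set.Iic n)) (LinearMap.ker (revCoeffs (K := K) n)) := by
  refine LinearMap.disjoint_ker.2 fun f hf h0 => Finsupp.ext fun j => ?_
  by_cases hj : j ≤ n
  · simpa [revCoeffs, Nat.sub_sub_self hj] using congrFun h0 ⟨n - j, by omega⟩
  · exact (Finsupp.mem_supported' K f).1 hf j hj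

variable [Field K] [Ring A] {δ : K →+ K} {ι : K →+* A} {D : A} {e : (ℕ →₀ K) ≃ A}
  (hcomm : ∀ a : K, D * ι a = ι a * D + ι (δ a))
  (he : ∀ f : ℕ →₀ K, e f = f.sum fun i a => ι a * D ^ i)

section Expansion

include he

theorem apply_zero : e 0 = 0 := by
  rw [he, Finsupp.sum_zero_index]

theorem apply_add (f g : ℕ →₀ K) : e (f + g) = e f + e g := by
  simp only [he]
  exact Finsupp.sum_add_index' (by simp) fun _ _ _ => by rw [map_add, add_mul]

theorem apply_smul (a : K) (f : ℕ →₀ K) : e (a • f) = ι a * e f := by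
  simp only [he, Finsupp.sum_smul_index (h := fun i a => ι a * D ^ i) (by simp),
    Finsupp.mul_sum, map_mul, mul_assoc]

theorem apply_single (k : ℕ) (a : K) : e (single k a) = ι a * D ^ k := by
  rw [he, Finsupp.sum_single_index (by simp)]

noncomputable def coeffAddEquiv : A ≃+ (ℕ →₀ K) :=
  ({ e with map_add' := apply_add he } : (ℕ →₀ K) ≃+ A).symm

theorem coeffAddEquiv_apply (x : A) : coeffAddEquiv he x = e.symm x := rfl

theorem symm_zero : e.symm 0 = 0 := map_zero (coeffAddEquiv he)

theorem symm_add (x y : A) : e.symm (x + y) = e.symm x + e.symm y :=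
  map_add (coeffAddEquiv he) x y

theorem symm_sub (x y : A) : e.symm (x - y) = e.symm x - e.symm y :=
  map_sub (coeffAddEquiv he) x y

theorem symm_mul_left (a : K) (x : A) : e.symm (ι a * x) = a • e.symm x := by
  rw [Equiv.symm_apply_eq, apply_smul he, e.apply_symm_apply]

theorem symm_mul (x y : A) :
    e.symm (x * y) = (e.symm x).sum fun i a => a • e.symm (D ^ i * y) := by
  conv_lhs => rw [← e.apply_symm_apply x, he, Finsupp.sum_mul]
  rw [← coeffAddEquiv_apply he, map_finsuppSum]
  simp only [coeffAddEquiv_apply, mul_assoc, symm_mul_left he]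

theorem coeff_ordOf_ne_zero {x : A} (hx : x ≠ 0) : e.symm x (ordOf e x) ≠ 0 := by
  have hsupp : (e.symm x).support.Nonempty := by
    rwa [Finsupp.support_nonempty_iff, ← symm_zero he, e.symm.injective.ne_iff]
  obtain ⟨i, hi, hsup⟩ := Finset.exists_mem_eq_sup _ hsupp id
  rw [ordOf, hsup]
  exact Finsupp.mem_support_iff.1 hi

end Expansion

section Commutation

include hcomm he

theorem symm_D_mul (x : A) :
    e.symm (D * x) = (e.symm x).mapDomain Nat.succ + (e.symm x).mapRange δ (map_zero δ) := by
  obtain ⟨f, rfl⟩ := e.surjective x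
  rw [e.symm_apply_apply, Equiv.symm_apply_eq]
  induction f using Finsupp.induction_linear with
  | zero => simp [apply_zero he]
  | add f g hf hg =>
    rw [apply_add he, mul_add, hf, hg, Finsupp.mapDomain_add, Finsupp.mapRange_add (map_add δ),
      ← apply_add he, add_add_add_comm]
  | single k a =>
    rw [Finsupp.mapDomain_single, Finsupp.mapRange_single, apply_add he, apply_single he,
      apply_single he, apply_single he, ← mul_assoc, hcomm, add_mul, mul_assoc, ← pow_succ']

theorem coeff_D_mul_succ (x : A) (j : ℕ) :
    e.symm (D * x) (j + 1) = e.symm x j + δ (e.symm x (j + 1)) := by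
  rw [symm_D_mul hcomm he, Finsupp.add_apply, Finsupp.mapRange_apply,
    Finsupp.mapDomain_apply Nat.succ_injective]

theorem ordOf_D_pow_mul_le (x : A) (k : ℕ) : ordOf e (D ^ k * x) ≤ ordOf e x + k := by
  induction k with
  | zero => simp
  | succ k ih =>
    refine ordOf_le_iff.2 fun j hj => ?_
    obtain ⟨i, rfl⟩ : ∃ i, j = i + 1 := ⟨j - 1, by omega⟩
    rw [pow_succ', mul_assoc, coeff_D_mul_succ hcomm he, coeff_eq_zero_of_ordOf_lt (by omega),
      coeff_eq_zero_of_ordOf_lt (by omega), map_zero, add_zero]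

theorem coeff_D_pow_mul_ordOf_add (x : A) (k : ℕ) :
    e.symm (D ^ k * x) (ordOf e x + k) = e.symm x (ordOf e x) := by
  induction k with
  | zero => simp
  | succ k ih =>
    have := ordOf_D_pow_mul_le hcomm he x k
    rw [pow_succ', mul_assoc, ← add_assoc, coeff_D_mul_succ hcomm he, ih,
      coeff_eq_zero_of_ordOf_lt (x := D ^ k * x) (by omega), map_zero, add_zero]

theorem ordOf_mul_le (x y : A) : ordOf e (x * y) ≤ ordOf e x + ordOf e y := by
  rw [ordOf_le_iff_mem_supported, symm_mul he]
  refine Submodule.finsuppSum_mem _ _ _ _ fun i hi => Submodule.smul_mem _ _ ?_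
  have := le_ordOf_of_coeff_ne_zero hi
  exact ordOf_le_iff_mem_supported.1 ((ordOf_D_pow_mul_le hcomm he y i).trans (by omega))

theorem coeff_mul_ordOf_add (x y : A) :
    e.symm (x * y) (ordOf e x + ordOf e y) = e.symm x (ordOf e x) * e.symm y (ordOf e y) := by
  rw [symm_mul he, Finsupp.sum_apply, Finsupp.sum_eq_single (ordOf e x)]
  · rw [Finsupp.smul_apply, smul_eq_mul, add_comm, coeff_D_pow_mul_ordOf_add hcomm he]
  · intro i hi hne
    have := le_ordOf_of_coeff_ne_zero hi
    have := ordOf_D_pow_mul_le hcomm he y i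
    rw [Finsupp.smul_apply, coeff_eq_zero_of_ordOf_lt (x := D ^ i * y) (by omega), smul_zero]
  · simp

theorem ordOf_mul {x y : A} (hx : x ≠ 0) (hy : y ≠ 0) :
    ordOf e (x * y) = ordOf e x + ordOf e y := by
  refine (ordOf_mul_le hcomm he x y).antisymm (le_ordOf_of_coeff_ne_zero ?_)
  rw [coeff_mul_ordOf_add hcomm he]
  exact mul_ne_zero (coeff_ordOf_ne_zero he hx) (coeff_ordOf_ne_zero he hy)

theorem noZeroDivisors : NoZeroDivisors A where
  eq_zero_or_eq_zero_of_mul_eq_zero {x y} hxy := by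
    by_contra! h
    apply mul_ne_zero (coeff_ordOf_ne_zero he h.1) (coeff_ordOf_ne_zero he h.2)
    rw [← coeff_mul_ordOf_add hcomm he, hxy, symm_zero he, Finsupp.zero_apply]

/-- Left Euclidean division; the remainder condition reads `r = 0 ∨ ordOf e r < ordOf e y`. -/
theorem exists_eq_mul_add {y : A} (hy : y ≠ 0) (x : A) :
    ∃ q r, x = q * y + r ∧ ∀ j, ordOf e y ≤ j → e.symm r j = 0 := by
  suffices H : ∀ n x, (∀ j, n ≤ j → e.symm x j = 0) →
      ∃ q r, x = q * y + r ∧ ∀ j, ordOf e y ≤ j → e.symm r j = 0 from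
    H _ x fun j hj => coeff_eq_zero_of_ordOf_lt hj
  intro n
  induction n with
  | zero => exact fun x hx => ⟨0, x, by simp, fun j _ => hx j j.zero_le⟩
  | succ n ih =>
    intro x hx
    rcases lt_or_ge n (ordOf e y) with hn | hn
    · exact ⟨0, x, by simp, fun j hj => hx j (by omega)⟩
    set c := ι (e.symm x n / e.symm y (ordOf e y)) * D ^ (n - ordOf e y)
    have hlow : ∀ j, n ≤ j → e.symm (x - c * y) j = 0 := by
      intro j hj
      rw [symm_sub he, Finsupp.sub_apply, mul_assoc, symm_mul_left he, Finsupp.smul_apply,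
        smul_eq_mul, sub_eq_zero]
      rcases hj.eq_or_lt with rfl | hj
      · have htop := coeff_D_pow_mul_ordOf_add hcomm he y (n - ordOf e y)
        rw [Nat.add_sub_cancel' hn] at htop
        rw [htop, div_mul_cancel₀ _ (coeff_ordOf_ne_zero he hy)]
      · have := ordOf_D_pow_mul_le hcomm he y (n - ordOf e y)
        rw [hx j hj, coeff_eq_zero_of_ordOf_lt (x := D ^ (n - ordOf e y) * y) (by omega), mul_zero]
    obtain ⟨q, r, hqr, hr⟩ := ih (x - c * y) hlow
    exact ⟨c + q, r, by rw [add_mul, add_assoc, ← hqr, add_sub_cancel], hr⟩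

end Commutation

section MulSpan

include he

noncomputable def coeffMulRight (P : A) : (ℕ →₀ K) →ₗ[K] ℕ →₀ K where
  toFun f := e.symm (e f * P)
  map_add' f g := by rw [apply_add he, add_mul, symm_add he]
  map_smul' a f := by rw [apply_smul he, mul_assoc, symm_mul_left he]; rfl

noncomputable def mulSpan (P : A) (s : ℕ) : Submodule K (ℕ →₀ K) :=
  (supported K K (Set.Iic s)).map (coeffMulRight he P)

theorem mem_mulSpan {P : A} {s : ℕ} {x : ℕ →₀ K} :
    x ∈ mulSpan he P s ↔ ∃ Q, ordOf e Q ≤ s ∧ e.symm (Q * P) = x := by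
  simp only [mulSpan, Submodule.mem_map, ordOf_le_iff_mem_supported]
  constructor
  · rintro ⟨f, hf, rfl⟩
    exact ⟨e f, by rwa [e.symm_apply_apply], rfl⟩
  · rintro ⟨Q, hQ, rfl⟩
    exact ⟨e.symm Q, hQ, by simp [coeffMulRight]⟩

include hcomm in
theorem coeffMulRight_injective {P : A} (hP : P ≠ 0) : Function.Injective (coeffMulRight he P) := by
  have := noZeroDivisors hcomm he
  refine (injective_iff_map_eq_zero _).2 fun f hf => ?_
  rw [coeffMulRight, LinearMap.coe_mk, AddHom.coe_mk, ← symm_zero he,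
    e.symm.injective.eq_iff, mul_eq_zero, or_iff_left hP, ← apply_zero he] at hf
  exact e.injective hf

include hcomm in
theorem finrank_mulSpan {P : A} (hP : P ≠ 0) (s : ℕ) :
    Module.finrank K (mulSpan he P s) = s + 1 := by
  rw [mulSpan, ← (Submodule.equivMapOfInjective _ (coeffMulRight_injective hcomm he hP)
    _).finrank_eq, (Finsupp.supportedEquivFinsupp _).finrank_eq, Module.finrank_finsupp_self]
  simp

include hcomm in
theorem mulSpan_le_supported (P : A) (s : ℕ) :
    mulSpan he P s ≤ supported K K (Set.Iic (s + ordOf e P)) := by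
  rintro x hx
  obtain ⟨Q, hQ, rfl⟩ := (mem_mulSpan he).1 hx
  exact ordOf_le_iff_mem_supported.1 ((ordOf_mul_le hcomm he Q P).trans (by omega))

theorem span_range_syl (n m : ℕ) (P : A) :
    Submodule.span K (Set.range (Syl e D n m P)) = (mulSpan he P (n - m)).map (revCoeffs n) := by
  have hrow : (Syl e D n m P : Fin (n - m + 1) → Fin (n + 1) → K) =
      fun i : Fin (n - m + 1) =>
        (revCoeffs n ∘ coeffMulRight he P ∘ fun k => single k 1) (n - m - i) := by
    ext i j
    simp [Syl, phiV, revCoeffs, coeffMulRight, apply_single he]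
  rw [mulSpan, Finsupp.supported_eq_span_single, Submodule.map_span, Submodule.map_span,
    ← Set.image_comp, ← Set.image_comp, hrow, range_fin_rev_eq_image_Iic]
  rfl

include hcomm in
theorem rank_syl_stack {n m₁ m₂ : ℕ} {P₁ P₂ : A} (h₁ : ordOf e P₁ ≤ m₁) (h₂ : ordOf e P₂ ≤ m₂)
    (hm₁ : m₁ ≤ n) (hm₂ : m₂ ≤ n) :
    (Matrix.of (Sum.elim (Syl e D n m₁ P₁) (Syl e D n m₂ P₂)) :
        Matrix (Fin (n - m₁ + 1) ⊕ Fin (n - m₂ + 1)) (Fin (n + 1)) K).rank =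
      Module.finrank K ↥(mulSpan he P₁ (n - m₁) ⊔ mulSpan he P₂ (n - m₂)) := by
  have hle : ∀ {P : A} {m : ℕ}, ordOf e P ≤ m → m ≤ n →
      mulSpan he P (n - m) ≤ supported K K (Set.Iic n) := fun hP hm =>
    (mulSpan_le_supported hcomm he _ _).trans (Finsupp.supported_mono (Set.Iic_subset_Iic.2
      (by omega)))
  have hrows : Set.range (Matrix.of (Sum.elim (Syl e D n m₁ P₁) (Syl e D n m₂ P₂))).row =
      Set.range (Syl e D n m₁ P₁) ∪ Set.range (Syl e D n m₂ P₂) :=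
    Set.Sum.elim_range _ _
  rw [Matrix.rank_eq_finrank_span_row, hrows, Submodule.span_union, span_range_syl he,
    span_range_syl he, ← Submodule.map_sup, finrank_map_eq_of_disjoint_ker]
  exact (disjoint_supported_ker_revCoeffs n).mono_left (sup_le (hle h₁ hm₁) (hle h₂ hm₂))

end MulSpan

theorem isCLM_pair_iff {L₁ L₂ M : A} :
    IsCLM ![L₁, L₂] M ↔ M ≠ 0 ∧ (∃ Q, M = Q * L₁) ∧ ∃ Q, M = Q * L₂ := by
  simp [IsCLM, Fin.forall_fin_two]

section LCLM

include hcomm he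

theorem exists_eq_mul_of_isLCLM {k : ℕ} {L : Fin k → A} {Lc M : A} (hLc : IsLCLM e L Lc)
    (hM : ∀ i, ∃ Q, M = Q * L i) : ∃ Q, M = Q * Lc := by
  obtain ⟨q, r, hqr, hr⟩ := exists_eq_mul_add hcomm he hLc.1.1 M
  by_cases hr0 : r = 0
  · exact ⟨q, by rw [hqr, hr0, add_zero]⟩
  -- the remainder is a common left multiple of order below `ordOf e Lc`
  refine absurd (hr _ (hLc.2 r ⟨hr0, fun i => ?_⟩)) (coeff_ordOf_ne_zero he hr0)
  obtain ⟨Q, hQ⟩ := hM i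
  obtain ⟨C, hC⟩ := hLc.1.2 i
  exact ⟨Q - q * C, by rw [sub_mul, mul_assoc, ← hC, ← hQ, hqr, add_sub_cancel_left]⟩

theorem mulSpan_mul_le {C L : A} {s t : ℕ} (h : s + ordOf e C ≤ t) :
    mulSpan he (C * L) s ≤ mulSpan he L t := by
  intro x hx
  obtain ⟨Q, hQ, rfl⟩ := (mem_mulSpan he).1 hx
  have := ordOf_mul_le hcomm he Q C
  exact (mem_mulSpan he).2 ⟨Q * C, by omega, by rw [mul_assoc]⟩

theorem ordOf_lclm_le_of_inf_ne_bot {L₁ L₂ Lc : A} (hLc : IsLCLM e ![L₁, L₂] Lc) {s₁ s₂ : ℕ}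
    (h : mulSpan he L₁ s₁ ⊓ mulSpan he L₂ s₂ ≠ ⊥) : ordOf e Lc ≤ s₁ + ordOf e L₁ := by
  obtain ⟨x, hx, hx0⟩ := Submodule.exists_mem_ne_zero_of_ne_bot h
  obtain ⟨Q₁, hQ₁, rfl⟩ := (mem_mulSpan he).1 (Submodule.mem_inf.1 hx).1
  obtain ⟨Q₂, -, hQ₂⟩ := (mem_mulSpan he).1 (Submodule.mem_inf.1 hx).2
  have hclm : IsCLM ![L₁, L₂] (Q₁ * L₁) := isCLM_pair_iff.2
    ⟨fun h0 => hx0 (by rw [h0, symm_zero he]), ⟨Q₁, rfl⟩, Q₂, e.symm.injective hQ₂.symm⟩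
  calc ordOf e Lc ≤ ordOf e (Q₁ * L₁) := hLc.2 _ hclm
    _ ≤ ordOf e Q₁ + ordOf e L₁ := ordOf_mul_le hcomm he _ _
    _ ≤ s₁ + ordOf e L₁ := by omega

theorem inf_mulSpan_eq_mulSpan_lclm {L₁ L₂ Lc : A} (hLc : IsLCLM e ![L₁, L₂] Lc) {n : ℕ}
    (hn : ordOf e Lc ≤ n) :
    mulSpan he L₁ (n - ordOf e L₁) ⊓ mulSpan he L₂ (n - ordOf e L₂) =
      mulSpan he Lc (n - ordOf e Lc) := by
  obtain ⟨hLc0, ⟨C₁, hC₁⟩, C₂, hC₂⟩ := isCLM_pair_iff.1 hLc.1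
  have hord : ∀ {C L : A}, Lc = C * L → ordOf e Lc = ordOf e C + ordOf e L := fun hC =>
    hC ▸ ordOf_mul hcomm he (left_ne_zero_of_mul (hC ▸ hLc0)) (right_ne_zero_of_mul (hC ▸ hLc0))
  apply le_antisymm
  · intro x hx
    obtain ⟨Q₁, hQ₁, rfl⟩ := (mem_mulSpan he).1 (Submodule.mem_inf.1 hx).1
    obtain ⟨Q₂, -, hQ₂⟩ := (mem_mulSpan he).1 (Submodule.mem_inf.1 hx).2
    obtain ⟨q, hq⟩ := exists_eq_mul_of_isLCLM hcomm he hLc (M := Q₁ * L₁)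
      (Fin.forall_fin_two.2 ⟨⟨Q₁, rfl⟩, Q₂, e.symm.injective hQ₂.symm⟩)
    refine (mem_mulSpan he).2 ⟨q, ?_, by rw [hq]⟩
    rcases eq_or_ne q 0 with rfl | hq0
    · simp [ordOf, symm_zero he]
    have hmul := ordOf_mul hcomm he hq0 hLc0
    rw [← hq] at hmul
    have := ordOf_mul_le hcomm he Q₁ L₁
    have := hord hC₁
    omega
  · have hdiv : ∀ {C L : A}, Lc = C * L →
        mulSpan he Lc (n - ordOf e Lc) ≤ mulSpan he L (n - ordOf e L) := by
      intro C L hC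
      have := hord hC
      rw [hC] at this hn ⊢
      exact mulSpan_mul_le hcomm he (by omega)
    exact le_inf (hdiv hC₁) (hdiv hC₂)

end LCLM

end DiffOp

open DiffOp in
theorem ord_lclm_eq_rank_U_general [Field K] [Ring A]
    (δ : K →+ K)
    (ι : K →+* A) (D : A)
    (hcomm : ∀ a : K, D * ι a = ι a * D + ι (δ a))
    (e : (ℕ →₀ K) ≃ A)
    (he : ∀ f : ℕ →₀ K, e f = f.sum fun i a => ι a * D ^ i)
    (L₁ L₂ : A) (hL₁ : L₁ ≠ 0) (hL₂ : L₂ ≠ 0)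
    (r₁ r₂ : ℕ) (hr₁ : ordOf e L₁ = r₁) (hr₂ : ordOf e L₂ = r₂)
    (Lc : A) (hLc : IsLCLM e ![L₁, L₂] Lc) :
    ordOf e Lc + 1 =
      (Matrix.of (Sum.elim (Syl e D (r₁ + r₂) r₁ L₁) (Syl e D (r₁ + r₂) r₂ L₂)) :
        Matrix (Fin (r₁ + r₂ - r₁ + 1) ⊕ Fin (r₁ + r₂ - r₂ + 1))
          (Fin (r₁ + r₂ + 1)) K).rank := by
  subst hr₁ hr₂
  set n := ordOf e L₁ + ordOf e L₂
  set V₁ := mulSpan he L₁ (n - ordOf e L₁)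
  set V₂ := mulSpan he L₂ (n - ordOf e L₂)
  have hrank : _ = Module.finrank K ↥(V₁ ⊔ V₂) :=
    rank_syl_stack hcomm he le_rfl le_rfl (Nat.le_add_right _ _) (Nat.le_add_left _ _)
  have hdim₁ : Module.finrank K V₁ = n - ordOf e L₁ + 1 := finrank_mulSpan hcomm he hL₁ _
  have hdim₂ : Module.finrank K V₂ = n - ordOf e L₂ + 1 := finrank_mulSpan hcomm he hL₂ _
  have : FiniteDimensional K V₁ := FiniteDimensional.of_finrank_pos (by omega)
  have : FiniteDimensional K V₂ := FiniteDimensional.of_finrank_pos (by omega)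
  have hsum := Submodule.finrank_sup_add_finrank_inf_eq V₁ V₂
  have hwidth : Module.finrank K ↥(V₁ ⊔ V₂) ≤ n + 1 :=
    hrank ▸ (Matrix.rank_le_card_width _).trans_eq (Fintype.card_fin _)
  have hd : ordOf e Lc ≤ n := by
    refine (ordOf_lclm_le_of_inf_ne_bot hcomm he hLc (s₁ := n - ordOf e L₁)
      (s₂ := n - ordOf e L₂) fun hbot => ?_).trans (by omega)
    rw [hbot, finrank_bot] at hsum
    omega
  have hinf : Module.finrank K ↥(V₁ ⊓ V₂) = n - ordOf e Lc + 1 := by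
    rw [show V₁ ⊓ V₂ = _ from inf_mulSpan_eq_mulSpan_lclm hcomm he hLc hd]
    exact finrank_mulSpan hcomm he hLc.1.1 _
  omega

/-- `ord(lclm(L₁,L₂)) = rank(U_{r₁+r₂}) − 1`, where
`U_n = [S_n(L₁); S_n(L₂)]` (stated additively). -/
theorem ord_lclm_eq_rank_U [Field K] [Ring A]
    (δ : K →+ K) (hLeib : ∀ a b : K, δ (a * b) = a * δ b + δ a * b)
    (ι : K →+* A) (D : A)
    (hcomm : ∀ a : K, D * ι a = ι a * D + ι (δ a))
    (e : (ℕ →₀ K) ≃ A)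
    (he : ∀ f : ℕ →₀ K, e f = f.sum fun i a => ι a * D ^ i)
    (L₁ L₂ : A) (hL₁ : L₁ ≠ 0) (hL₂ : L₂ ≠ 0)
    (r₁ r₂ : ℕ) (hr₁ : ordOf e L₁ = r₁) (hr₂ : ordOf e L₂ = r₂)
    (Lc : A) (hLc : IsLCLM e ![L₁, L₂] Lc) :
    ordOf e Lc + 1 =
      (Matrix.of (Sum.elim (Syl e D (r₁ + r₂) r₁ L₁) (Syl e D (r₁ + r₂) r₂ L₂)) :
        Matrix (Fin (r₁ + r₂ - r₁ + 1) ⊕ Fin (r₁ + r₂ - r₂ + 1))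
          (Fin (r₁ + r₂ + 1)) K).rank :=
  ord_lclm_eq_rank_U_general δ ι D hcomm e he L₁ L₂ hL₁ hL₂ r₁ r₂ hr₁ hr₂ Lc hLc
end

section
/- Let L_1, L_2 be nonzero operators in K[∂;δ] of orders r_1, r_2, and let ℓ = ord(lclm(L_1,L_2)). Then a maximal K-linearly independent subset of {∂^{r_2}L_1, ..., ∂L_1, L_1, ∂^{r_1}L_2, ..., ∂L_2, L_2} is given by {∂^{r_2}L_1, ..., L_1} ∪ {∂^{ℓ−r_2−1}L_2, ..., L_2}; in particular, the K-span of this family has dimension r_2 + ℓ − r_2 − 1 + 2 = ℓ + 1... i.e., the dimension of the K-span of {∂^j L_1 : 0 ≤ j ≤ r_2} ∪ {∂^j L_2 : 0 ≤ j ≤ r_1} in K[∂;δ]_{≤ r_1+r_2} equals ℓ + 1. -/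
/-!
Identify an operator of order `≤ n` with its coefficient vector `φ_n`. A linear relation among
the vectors of `∂^j L₁` (`j < m₁`) and `∂^j L₂` (`j < m₂`) is then an identity `P L₁ + Q L₂ = 0`
with `ord P < m₁` and `ord Q < m₂`. Orders add under multiplication, so for `Q ≠ 0` the operator
`Q L₂ = -P L₁` is a common left multiple of order `< m₂ + r₂`; hence there is no nontrivial
relation once `m₂ + r₂ ≤ ℓ`. This gives the independence of the smaller family and, since the
full family has `r₁ + r₂ + 2` members in a space of dimension `r₁ + r₂ + 1`, also `ℓ ≤ r₁ + r₂`.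

Conversely, write the lclm as `Q₁ L₁ = Q₂ L₂`, so that `ord Q₂ = ℓ - r₂`. For every `t`, the
operator `∂^t Q₂` has order `t + ℓ - r₂` and a nonzero leading coefficient, and
`∂^t Q₂ L₂ = ∂^t Q₁ L₁` only involves `∂^i L₁` with `i ≤ r₂`. Solving for the top term expresses
`∂^{t + ℓ - r₂} L₂` through lower ones, which settles the span by induction.
-/

section

variable {K A : Type*}

structure IsDiffOpBasis [Semiring K] [Semiring A] (δ : K →+ K) (ι : K →+* A) (D : A)
    (e : (ℕ →₀ K) ≃ A) : Prop where
  mul_iota : ∀ a : K, D * ι a = ι a * D + ι (δ a)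
  apply_eq_sum : ∀ f : ℕ →₀ K, e f = f.sum fun i a => ι a * D ^ i

section ordOf

variable [Zero K] {e : (ℕ →₀ K) ≃ A} {x : A} {i m : ℕ}

theorem le_ordOf_of_coeff_ne_zero (h : e.symm x i ≠ 0) : i ≤ ordOf e x :=
  Finset.le_sup (f := id) (Finsupp.mem_support_iff.2 h)

theorem coeff_eq_zero_of_ordOf_lt (h : ordOf e x < i) : e.symm x i = 0 :=
  not_not.1 fun h' => (le_ordOf_of_coeff_ne_zero h').not_gt h

theorem ordOf_le_iff : ordOf e x ≤ m ↔ ∀ i, m < i → e.symm x i = 0 :=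
  ⟨fun h _ hi => coeff_eq_zero_of_ordOf_lt (h.trans_lt hi), fun h => Finset.sup_le fun i hi =>
    not_lt.1 fun hmi => Finsupp.mem_support_iff.1 hi (h i hmi)⟩

theorem coeff_ordOf_ne_zero (h : e.symm x ≠ 0) : e.symm x (ordOf e x) ≠ 0 := by
  obtain ⟨i, hi, hsup⟩ := Finset.exists_mem_eq_sup _ (Finsupp.support_nonempty_iff.2 h) id
  rw [ordOf, hsup]
  exact Finsupp.mem_support_iff.1 hi

end ordOf

namespace IsDiffOpBasis

section Semiring

variable [Semiring K] [Semiring A] {δ : K →+ K} {ι : K →+* A} {D : A} {e : (ℕ →₀ K) ≃ A}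
  (h : IsDiffOpBasis δ ι D e)
include h

theorem apply_add (f g : ℕ →₀ K) : e (f + g) = e f + e g := by
  simp only [h.apply_eq_sum]
  exact Finsupp.sum_add_index' (fun _ => by simp) fun _ _ _ => by simp [add_mul]

def toAddEquiv : (ℕ →₀ K) ≃+ A :=
  { e with map_add' := h.apply_add }

theorem symm_add (x y : A) : e.symm (x + y) = e.symm x + e.symm y :=
  map_add h.toAddEquiv.symm x y

theorem symm_sum {β : Type*} (s : Finset β) (g : β → A) :
    e.symm (∑ b ∈ s, g b) = ∑ b ∈ s, e.symm (g b) :=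
  map_sum h.toAddEquiv.symm g s

theorem symm_eq_zero_iff {x : A} : e.symm x = 0 ↔ x = 0 :=
  map_eq_zero_iff h.toAddEquiv.symm h.toAddEquiv.symm.injective

theorem symm_iota_mul (a : K) (x : A) : e.symm (ι a * x) = a • e.symm x := by
  rw [Equiv.symm_apply_eq, h.apply_eq_sum, Finsupp.sum_smul_index (fun _ => by simp)]
  conv_lhs => rw [← e.apply_symm_apply x, h.apply_eq_sum, Finsupp.mul_sum]
  exact Finsupp.sum_congr fun _ _ => by rw [map_mul, mul_assoc]

theorem mul_eq_sum (x y : A) :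
    x * y = ∑ i ∈ (e.symm x).support, ι (e.symm x i) * (D ^ i * y) := by
  conv_lhs => rw [← e.apply_symm_apply x, h.apply_eq_sum, Finsupp.sum, Finset.sum_mul]
  simp only [mul_assoc]

theorem symm_D_mul (x : A) :
    e.symm (D * x) = (e.symm x).mapDomain Nat.succ + (e.symm x).mapRange δ δ.map_zero := by
  rw [Equiv.symm_apply_eq, h.apply_add, h.apply_eq_sum, h.apply_eq_sum,
    Finsupp.sum_mapDomain_index_inj Nat.succ_injective,
    Finsupp.sum_mapRange_index (fun _ => by simp), ← Finsupp.sum_add]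
  conv_lhs => rw [← e.apply_symm_apply x, h.apply_eq_sum, Finsupp.mul_sum]
  refine Finsupp.sum_congr fun i _ => ?_
  rw [← mul_assoc, h.mul_iota, add_mul, mul_assoc, ← pow_succ']

theorem coeff_D_mul_succ (x : A) (i : ℕ) :
    e.symm (D * x) (i + 1) = e.symm x i + δ (e.symm x (i + 1)) := by
  simp [h.symm_D_mul, Finsupp.mapDomain_apply Nat.succ_injective]

theorem ordOf_D_pow_mul_le {y : A} {r : ℕ} (hy : ordOf e y ≤ r) (k : ℕ) :
    ordOf e (D ^ k * y) ≤ k + r := by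
  induction k with
  | zero => simpa using hy
  | succ k ih =>
    refine ordOf_le_iff.2 fun j hj => ?_
    obtain ⟨i, rfl⟩ := Nat.exists_eq_add_of_lt hj
    rw [pow_succ', mul_assoc, show k + 1 + r + i + 1 = (k + r + 1 + i) + 1 by omega,
      h.coeff_D_mul_succ, coeff_eq_zero_of_ordOf_lt (by omega),
      coeff_eq_zero_of_ordOf_lt (by omega), map_zero, add_zero]

theorem coeff_D_pow_mul_add {y : A} {r : ℕ} (hy : ordOf e y ≤ r) (k : ℕ) :
    e.symm (D ^ k * y) (k + r) = e.symm y r := by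
  induction k with
  | zero => simp
  | succ k ih =>
    rw [pow_succ', mul_assoc, add_right_comm, h.coeff_D_mul_succ, ih,
      coeff_eq_zero_of_ordOf_lt ((h.ordOf_D_pow_mul_le hy k).trans_lt (by omega)), map_zero,
      add_zero]

theorem coeff_mul (x y : A) (j : ℕ) :
    e.symm (x * y) j = ∑ i ∈ (e.symm x).support, e.symm x i * e.symm (D ^ i * y) j := by
  rw [h.mul_eq_sum, h.symm_sum, Finsupp.finsetSum_apply]
  simp only [h.symm_iota_mul, Finsupp.smul_apply, smul_eq_mul]

theorem ordOf_mul_le {x y : A} {m r : ℕ} (hx : ordOf e x ≤ m) (hy : ordOf e y ≤ r) :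
    ordOf e (x * y) ≤ m + r := by
  refine ordOf_le_iff.2 fun j hj => ?_
  rw [h.coeff_mul]
  refine Finset.sum_eq_zero fun i hi => ?_
  have hi : i ≤ m := (le_ordOf_of_coeff_ne_zero (Finsupp.mem_support_iff.1 hi)).trans hx
  rw [coeff_eq_zero_of_ordOf_lt ((h.ordOf_D_pow_mul_le hy i).trans_lt (by omega)), mul_zero]

theorem coeff_mul_add {x y : A} {m r : ℕ} (hx : ordOf e x ≤ m) (hy : ordOf e y ≤ r) :
    e.symm (x * y) (m + r) = e.symm x m * e.symm y r := by
  rw [h.coeff_mul, Finset.sum_eq_single m, h.coeff_D_pow_mul_add hy]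
  · intro i hi him
    have hi : i < m :=
      ((le_ordOf_of_coeff_ne_zero (Finsupp.mem_support_iff.1 hi)).trans hx).lt_of_ne him
    rw [coeff_eq_zero_of_ordOf_lt ((h.ordOf_D_pow_mul_le hy i).trans_lt (by omega)), mul_zero]
  · intro hm
    rw [Finsupp.notMem_support_iff.1 hm, zero_mul]

theorem ordOf_add_le {x y : A} {m : ℕ} (hx : ordOf e x ≤ m) (hy : ordOf e y ≤ m) :
    ordOf e (x + y) ≤ m := by
  refine ordOf_le_iff.2 fun j hj => ?_
  rw [h.symm_add, Finsupp.add_apply, ordOf_le_iff.1 hx j hj, ordOf_le_iff.1 hy j hj, add_zero]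

theorem phiV_add (n : ℕ) (x y : A) : phiV e n (x + y) = phiV e n x + phiV e n y := by
  funext j
  simp [phiV, h.symm_add]

theorem phiV_sum {β : Type*} (n : ℕ) (s : Finset β) (g : β → A) :
    phiV e n (∑ b ∈ s, g b) = ∑ b ∈ s, phiV e n (g b) := by
  funext j
  simp [phiV, h.symm_sum, Finset.sum_apply]

theorem phiV_iota_mul (n : ℕ) (a : K) (x : A) : phiV e n (ι a * x) = a • phiV e n x := by
  funext j
  simp [phiV, h.symm_iota_mul]

theorem phiV_mul_eq_sum (n : ℕ) (x L : A) :
    phiV e n (x * L) = ∑ i ∈ (e.symm x).support, e.symm x i • phiV e n (D ^ i * L) := by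
  conv_lhs => rw [h.mul_eq_sum]
  simp only [h.phiV_sum, h.phiV_iota_mul]

theorem eq_zero_of_phiV_eq_zero {n : ℕ} {x : A} (hx : ordOf e x ≤ n) (h0 : phiV e n x = 0) :
    x = 0 := by
  refine h.symm_eq_zero_iff.1 (Finsupp.ext fun i => ?_)
  rcases le_or_gt i n with hi | hi
  · simpa [phiV, Nat.sub_sub_self hi] using congrFun h0 ⟨n - i, by omega⟩
  · exact coeff_eq_zero_of_ordOf_lt (hx.trans_lt hi)

section Coeffs

variable {m : ℕ} (c : Fin m → K)

theorem symm_sum_iota_mul_D_pow :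
    e.symm (∑ j : Fin m, ι (c j) * D ^ (j : ℕ)) =
      (Finsupp.equivFunOnFinite.symm c).embDomain Fin.valEmbedding := by
  rw [Equiv.symm_apply_eq, h.apply_eq_sum, Finsupp.sum_embDomain,
    Finsupp.sum_fintype _ _ (fun _ => by simp)]
  rfl

theorem sum_iota_mul_D_pow_eq_zero_iff : ∑ j : Fin m, ι (c j) * D ^ (j : ℕ) = 0 ↔ c = 0 := by
  rw [← h.symm_eq_zero_iff, h.symm_sum_iota_mul_D_pow, Finsupp.embDomain_eq_zero,
    Equiv.symm_apply_eq]
  rfl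

theorem ordOf_sum_iota_mul_D_pow_lt (hc : c ≠ 0) :
    ordOf e (∑ j : Fin m, ι (c j) * D ^ (j : ℕ)) < m := by
  by_contra! hm
  refine coeff_ordOf_ne_zero
    (h.symm_eq_zero_iff.not.2 ((h.sum_iota_mul_D_pow_eq_zero_iff c).not.2 hc)) ?_
  rw [h.symm_sum_iota_mul_D_pow, Finsupp.embDomain_of_notMem_range]
  rintro ⟨j, hj⟩
  have := j.isLt
  simp only [Fin.valEmbedding_apply] at hj
  omega

theorem ordOf_sum_iota_mul_D_pow_mul_le {L : A} {n : ℕ} (hn : m + ordOf e L ≤ n + 1) :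
    ordOf e ((∑ j : Fin m, ι (c j) * D ^ (j : ℕ)) * L) ≤ n := by
  rcases eq_or_ne c 0 with rfl | hc
  · refine ordOf_le_iff.2 fun i _ => ?_
    simp [h.symm_eq_zero_iff.2 rfl]
  · have := h.ordOf_sum_iota_mul_D_pow_lt c hc
    exact (h.ordOf_mul_le le_rfl le_rfl).trans (by omega)

theorem phiV_sum_iota_mul_D_pow_mul (n : ℕ) (L : A) :
    phiV e n ((∑ j : Fin m, ι (c j) * D ^ (j : ℕ)) * L) =
      ∑ j : Fin m, c j • phiV e n (D ^ (j : ℕ) * L) := by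
  simp only [Finset.sum_mul, h.phiV_sum, mul_assoc, h.phiV_iota_mul]

end Coeffs

section NoZeroDivisors

variable [NoZeroDivisors K]

theorem coeff_mul_ordOf_add_ne_zero {x y : A} (hx : x ≠ 0) (hy : y ≠ 0) :
    e.symm (x * y) (ordOf e x + ordOf e y) ≠ 0 := by
  rw [h.coeff_mul_add le_rfl le_rfl]
  exact mul_ne_zero (coeff_ordOf_ne_zero (h.symm_eq_zero_iff.not.2 hx))
    (coeff_ordOf_ne_zero (h.symm_eq_zero_iff.not.2 hy))

theorem noZeroDivisors : NoZeroDivisors A where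
  eq_zero_or_eq_zero_of_mul_eq_zero {x y} hxy := by
    by_contra! hne
    exact h.coeff_mul_ordOf_add_ne_zero hne.1 hne.2 (by rw [hxy, h.symm_eq_zero_iff.2 rfl]; rfl)

theorem ordOf_mul {x y : A} (hx : x ≠ 0) (hy : y ≠ 0) :
    ordOf e (x * y) = ordOf e x + ordOf e y :=
  (h.ordOf_mul_le le_rfl le_rfl).antisymm
    (le_ordOf_of_coeff_ne_zero (h.coeff_mul_ordOf_add_ne_zero hx hy))

end NoZeroDivisors

end Semiring

section Field

variable [Field K] [Ring A] {δ : K →+ K} {ι : K →+* A} {D : A} {e : (ℕ →₀ K) ≃ A}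
  (h : IsDiffOpBasis δ ι D e) {L₁ L₂ Lc : A}
include h

theorem exists_lclm_eq_mul {k : ℕ} {L : Fin k → A} (hLc : IsLCLM e L Lc) {i : Fin k}
    (hL : L i ≠ 0) : ∃ Q, Lc = Q * L i ∧ Q ≠ 0 ∧ ordOf e Lc = ordOf e Q + ordOf e (L i) := by
  obtain ⟨Q, hQ⟩ := hLc.1.2 i
  have hQ0 : Q ≠ 0 := by
    rintro rfl
    exact hLc.1.1 (by rw [hQ, zero_mul])
  exact ⟨Q, hQ, hQ0, hQ ▸ h.ordOf_mul hQ0 hL⟩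

theorem ordOf_lclm_le_of_mul_add_mul_eq_zero (hLc : IsLCLM e ![L₁, L₂] Lc) (hL₂ : L₂ ≠ 0)
    {P Q : A} (hQ : Q ≠ 0) (hPQ : P * L₁ + Q * L₂ = 0) :
    ordOf e Lc ≤ ordOf e Q + ordOf e L₂ := by
  have := h.noZeroDivisors
  have hCLM : IsCLM ![L₁, L₂] (Q * L₂) := by
    refine ⟨mul_ne_zero hQ hL₂, Fin.forall_fin_two.2 ⟨⟨-P, ?_⟩, ⟨Q, rfl⟩⟩⟩
    rw [neg_mul]
    exact eq_neg_of_add_eq_zero_right hPQ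
  exact (hLc.2 _ hCLM).trans (h.ordOf_mul hQ hL₂).le

theorem linearIndependent_phiV_D_pow_mul (hLc : IsLCLM e ![L₁, L₂] Lc) (hL₁ : L₁ ≠ 0)
    (hL₂ : L₂ ≠ 0) {n m₁ m₂ : ℕ} (h₁ : m₁ + ordOf e L₁ ≤ n + 1) (h₂ : m₂ + ordOf e L₂ ≤ n + 1)
    (hℓ : m₂ + ordOf e L₂ ≤ ordOf e Lc) :
    LinearIndependent K (Sum.elim (fun j : Fin m₁ => phiV e n (D ^ (j : ℕ) * L₁))
      (fun j : Fin m₂ => phiV e n (D ^ (j : ℕ) * L₂))) := by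
  have := h.noZeroDivisors
  refine Fintype.linearIndependent_iff.2 fun g hg => ?_
  set c := fun j => g (Sum.inl j)
  set d := fun j => g (Sum.inr j)
  set P := ∑ j : Fin m₁, ι (c j) * D ^ (j : ℕ)
  set Q := ∑ j : Fin m₂, ι (d j) * D ^ (j : ℕ)
  have hPQ : P * L₁ + Q * L₂ = 0 := by
    refine h.eq_zero_of_phiV_eq_zero (n := n) (h.ordOf_add_le ?_ ?_) ?_
    · exact h.ordOf_sum_iota_mul_D_pow_mul_le c h₁
    · exact h.ordOf_sum_iota_mul_D_pow_mul_le d h₂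
    · rw [h.phiV_add, h.phiV_sum_iota_mul_D_pow_mul, h.phiV_sum_iota_mul_D_pow_mul, ← hg,
        Fintype.sum_sum_type]
      rfl
  have hQ : Q = 0 := by
    by_contra hQ
    have := h.ordOf_lclm_le_of_mul_add_mul_eq_zero hLc hL₂ hQ hPQ
    have hQd : ordOf e Q < m₂ :=
      h.ordOf_sum_iota_mul_D_pow_lt d (mt (h.sum_iota_mul_D_pow_eq_zero_iff d).2 hQ)
    omega
  rw [hQ, zero_mul, add_zero, mul_eq_zero, or_iff_left hL₁] at hPQ
  rintro (j | j)
  · exact congrFun ((h.sum_iota_mul_D_pow_eq_zero_iff c).1 hPQ) j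
  · exact congrFun ((h.sum_iota_mul_D_pow_eq_zero_iff d).1 hQ) j

theorem phiV_D_pow_mul_mem_span {Q₁ Q₂ : A} (hQ : Q₁ * L₁ = Q₂ * L₂) (hQ₂ : Q₂ ≠ 0)
    {n m j : ℕ} (hj : j + ordOf e Q₁ < m + ordOf e Q₂) :
    phiV e n (D ^ j * L₂) ∈ Submodule.span K (Set.range (Sum.elim
      (fun i : Fin m => phiV e n (D ^ (i : ℕ) * L₁))
      (fun i : Fin (ordOf e Q₂) => phiV e n (D ^ (i : ℕ) * L₂)))) := by
  set W := Submodule.span K (Set.range (Sum.elim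
      (fun i : Fin m => phiV e n (D ^ (i : ℕ) * L₁))
      (fun i : Fin (ordOf e Q₂) => phiV e n (D ^ (i : ℕ) * L₂))))
  induction j using Nat.strong_induction_on with
  | _ j ih =>
  rcases lt_or_ge j (ordOf e Q₂) with hj' | hj'
  · exact Submodule.subset_span ⟨Sum.inr ⟨j, hj'⟩, rfl⟩
  obtain ⟨t, rfl⟩ := Nat.exists_eq_add_of_le' hj'
  set X := D ^ t * Q₂
  have hX : ordOf e X ≤ t + ordOf e Q₂ := h.ordOf_D_pow_mul_le le_rfl t
  have hXlead : e.symm X (t + ordOf e Q₂) ≠ 0 := by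
    rw [h.coeff_D_pow_mul_add le_rfl]
    exact coeff_ordOf_ne_zero (h.symm_eq_zero_iff.not.2 hQ₂)
  have hXL : phiV e n (X * L₂) ∈ W := by
    rw [mul_assoc, ← hQ, ← mul_assoc, h.phiV_mul_eq_sum]
    refine W.sum_mem fun i hi => W.smul_mem _ (Submodule.subset_span ⟨Sum.inl ⟨i, ?_⟩, rfl⟩)
    have := (le_ordOf_of_coeff_ne_zero (Finsupp.mem_support_iff.1 hi)).trans
      (h.ordOf_D_pow_mul_le le_rfl t)
    omega
  have hlow : ∑ i ∈ (e.symm X).support.erase (t + ordOf e Q₂),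
      e.symm X i • phiV e n (D ^ i * L₂) ∈ W := by
    refine W.sum_mem fun i hi => W.smul_mem _ ?_
    have hi : i < t + ordOf e Q₂ := ((le_ordOf_of_coeff_ne_zero (Finsupp.mem_support_iff.1
      (Finset.mem_of_mem_erase hi))).trans hX).lt_of_ne (Finset.ne_of_mem_erase hi)
    exact ih i hi (by omega)
  rw [h.phiV_mul_eq_sum, ← Finset.add_sum_erase _ _ (Finsupp.mem_support_iff.2 hXlead)] at hXL
  exact (W.smul_mem_iff hXlead).1 ((W.add_mem_iff_left hlow).1 hXL)

end Field

end IsDiffOpBasis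

end

theorem span_dim_eq_ord_lclm_add_one_general [Field K] [Ring A]
    (δ : K →+ K)
    (ι : K →+* A) (D : A)
    (hcomm : ∀ a : K, D * ι a = ι a * D + ι (δ a))
    (e : (ℕ →₀ K) ≃ A)
    (he : ∀ f : ℕ →₀ K, e f = f.sum fun i a => ι a * D ^ i)
    (L₁ L₂ : A) (hL₁ : L₁ ≠ 0) (hL₂ : L₂ ≠ 0)
    (r₁ r₂ : ℕ) (hr₁ : ordOf e L₁ = r₁) (hr₂ : ordOf e L₂ = r₂)
    (Lc : A) (hLc : IsLCLM e ![L₁, L₂] Lc)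
    (ℓ : ℕ) (hℓ : ordOf e Lc = ℓ) :
    LinearIndependent K
      (Sum.elim
        (fun j : Fin (r₂ + 1) => phiV e (r₁ + r₂) (D ^ (j : ℕ) * L₁))
        (fun j : Fin (ℓ - r₂) => phiV e (r₁ + r₂) (D ^ (j : ℕ) * L₂))) ∧
    Submodule.span K
        (Set.range (Sum.elim
          (fun j : Fin (r₂ + 1) => phiV e (r₁ + r₂) (D ^ (j : ℕ) * L₁))
          (fun j : Fin (ℓ - r₂) => phiV e (r₁ + r₂) (D ^ (j : ℕ) * L₂)))) =
      Submodule.span K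
        (Set.range (Sum.elim
          (fun j : Fin (r₂ + 1) => phiV e (r₁ + r₂) (D ^ (j : ℕ) * L₁))
          (fun j : Fin (r₁ + 1) => phiV e (r₁ + r₂) (D ^ (j : ℕ) * L₂)))) ∧
    Module.finrank K
        (Submodule.span K
          (Set.range (Sum.elim
            (fun j : Fin (r₂ + 1) => phiV e (r₁ + r₂) (D ^ (j : ℕ) * L₁))
            (fun j : Fin (r₁ + 1) => phiV e (r₁ + r₂) (D ^ (j : ℕ) * L₂))))) =
      ℓ + 1 := by
  have h : IsDiffOpBasis δ ι D e := ⟨hcomm, he⟩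
  obtain ⟨Q₁, hQ₁, -, hordQ₁⟩ := h.exists_lclm_eq_mul hLc (i := 0) hL₁
  obtain ⟨Q₂, hQ₂, hQ₂0, hordQ₂⟩ := h.exists_lclm_eq_mul hLc (i := 1) hL₂
  simp only [Matrix.cons_val_zero, Matrix.cons_val_one] at hQ₁ hQ₂ hordQ₁ hordQ₂
  have hℓn : ℓ ≤ r₁ + r₂ := by
    by_contra! hlt
    have := (h.linearIndependent_phiV_D_pow_mul hLc hL₁ hL₂ (n := r₁ + r₂) (m₁ := r₂ + 1)
      (m₂ := r₁ + 1) (by omega) (by omega) (by omega)).fintype_card_le_finrank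
    simp only [Fintype.card_sum, Fintype.card_fin, Module.finrank_fin_fun] at this
    omega
  have hindep := h.linearIndependent_phiV_D_pow_mul hLc hL₁ hL₂ (n := r₁ + r₂) (m₁ := r₂ + 1)
    (m₂ := ℓ - r₂) (by omega) (by omega) (by omega)
  refine ⟨hindep, (and_iff_left_of_imp fun hspan => ?_).2 ?_⟩
  · rw [← hspan, finrank_span_eq_card hindep, Fintype.card_sum, Fintype.card_fin,
      Fintype.card_fin]
    omega
  refine le_antisymm (Submodule.span_mono ?_) (Submodule.span_le.2 ?_)
  · rintro _ ⟨j | ⟨j, hj⟩, rfl⟩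
    exacts [⟨Sum.inl j, rfl⟩, ⟨Sum.inr ⟨j, by omega⟩, rfl⟩]
  · rintro _ ⟨j | ⟨j, hj⟩, rfl⟩
    · exact Submodule.subset_span ⟨Sum.inl j, rfl⟩
    · have := h.phiV_D_pow_mul_mem_span (n := r₁ + r₂) (m := r₂ + 1) (j := j)
        (hQ₁.symm.trans hQ₂) hQ₂0 (by omega)
      rwa [show ordOf e Q₂ = ℓ - r₂ by omega] at this

/-- with `ℓ = ord(lclm(L₁,L₂))`, the family
`{∂^{r₂}L₁, ..., L₁} ∪ {∂^{ℓ−r₂−1}L₂, ..., L₂}` is a maximal linearly independent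
subfamily of `{∂^j L₁ : j ≤ r₂} ∪ {∂^j L₂ : j ≤ r₁}` (identified with coefficient
vectors in `K^{r₁+r₂+1}` via `φ_{r₁+r₂}`), and the span of the full family has
dimension `ℓ + 1`. -/
theorem span_dim_eq_ord_lclm_add_one [Field K] [Ring A]
    (δ : K →+ K) (hLeib : ∀ a b : K, δ (a * b) = a * δ b + δ a * b)
    (ι : K →+* A) (D : A)
    (hcomm : ∀ a : K, D * ι a = ι a * D + ι (δ a))
    (e : (ℕ →₀ K) ≃ A)
    (he : ∀ f : ℕ →₀ K, e f = f.sum fun i a => ι a * D ^ i)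
    (L₁ L₂ : A) (hL₁ : L₁ ≠ 0) (hL₂ : L₂ ≠ 0)
    (r₁ r₂ : ℕ) (hr₁ : ordOf e L₁ = r₁) (hr₂ : ordOf e L₂ = r₂)
    (Lc : A) (hLc : IsLCLM e ![L₁, L₂] Lc)
    (ℓ : ℕ) (hℓ : ordOf e Lc = ℓ) :
    LinearIndependent K
      (Sum.elim
        (fun j : Fin (r₂ + 1) => phiV e (r₁ + r₂) (D ^ (j : ℕ) * L₁))
        (fun j : Fin (ℓ - r₂) => phiV e (r₁ + r₂) (D ^ (j : ℕ) * L₂))) ∧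
    Submodule.span K
        (Set.range (Sum.elim
          (fun j : Fin (r₂ + 1) => phiV e (r₁ + r₂) (D ^ (j : ℕ) * L₁))
          (fun j : Fin (ℓ - r₂) => phiV e (r₁ + r₂) (D ^ (j : ℕ) * L₂)))) =
      Submodule.span K
        (Set.range (Sum.elim
          (fun j : Fin (r₂ + 1) => phiV e (r₁ + r₂) (D ^ (j : ℕ) * L₁))
          (fun j : Fin (r₁ + 1) => phiV e (r₁ + r₂) (D ^ (j : ℕ) * L₂)))) ∧
    Module.finrank K
        (Submodule.span K
          (Set.range (Sum.elim
            (fun j : Fin (r₂ + 1) => phiV e (r₁ + r₂) (D ^ (j : ℕ) * L₁))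
            (fun j : Fin (r₁ + 1) => phiV e (r₁ + r₂) (D ^ (j : ℕ) * L₂))))) =
      ℓ + 1 :=
  span_dim_eq_ord_lclm_add_one_general δ ι D hcomm e he L₁ L₂ hL₁ hL₂ r₁ r₂ hr₁ hr₂ Lc hLc ℓ hℓ
end
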